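/- Big-step reversibility of Janus conditionals via inversion: if ⟨σ, if e1 then s1 else s2 fi e2⟩ ⇓ σ' holds and executing the inverted branches undoes the original ones (i.e., ⟨σ, s_i⟩ ⇓ σ' implies ⟨σ', I(s_i)⟩ ⇓ σ for i = 1, 2), then ⟨σ', if e2 then I(s1) else I(s2) fi e1⟩ ⇓ σ, i.e., the inverted conditional maps σ' back to σ. -/
import Mathlib


/-- Janus reversible assignment operators: `+=`, `-=`, `^=`. -/
inductive Op where
  | add | sub | xor
deriving DecidableEq

/-- The operator inverter `I_op`. -/
def Op.inv : Op → Op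
  | .add => .sub
  | .sub => .add
  | .xor => .xor

/-- Interpretation of the operators on integers. -/
def Op.apply : Op → Int → Int → Int
  | .add, a, b => a + b
  | .sub, a, b => a - b
  | .xor, a, b => Int.xor a b

/-- Storage locations: plain variables and indexed array cells. -/
inductive Loc where
  | var (x : String)
  | arr (x : String) (i : Int)
deriving DecidableEq

/-- A store maps variable names and indexed variable names to values. -/
def Store := Loc → Int

def Store.update (σ : Store) (l : Loc) (v : Int) : Store :=
  fun l' => if l' = l then v else σ l'

/-- The empty store maps every variable to zero. -/
def emptyStore : Store := fun _ => 0

/-- Janus expressions. Binary operators are modelled by their interpretation. -/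
inductive Expr where
  | const (c : Int)
  | var (x : String)
  | arr (x : String) (e : Expr)
  | bop (f : Int → Int → Int) (e1 e2 : Expr)

/-- Evaluation of expressions (a deterministic function of the store). -/
def Expr.eval (σ : Store) : Expr → Int
  | .const c => c
  | .var x => σ (.var x)
  | .arr x e => σ (.arr x (Expr.eval σ e))
  | .bop f e1 e2 => f (Expr.eval σ e1) (Expr.eval σ e2)
/-- Janus statements. -/
inductive Stmt where
  | assign (x : String) (op : Op) (e : Expr)
  | assignArr (x : String) (ei : Expr) (op : Op) (e : Expr)
  | cond (e1 : Expr) (s1 s2 : Stmt) (e2 : Expr)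
  | loop (e1 : Expr) (s1 s2 : Stmt) (e2 : Expr)
  | call (id : String)
  | uncall (id : String)
  | skip
  | seq (s1 s2 : Stmt)

/-- The Janus statement inverter `I`. -/
def Stmt.inv : Stmt → Stmt
  | .assign x op e => .assign x op.inv e
  | .assignArr x ei op e => .assignArr x ei op.inv e
  | .cond e1 s1 s2 e2 => .cond e2 s1.inv s2.inv e1
  | .loop e1 s1 s2 e2 => .loop e2 s1.inv s2.inv e1
  | .call id => .uncall id
  | .uncall id => .call id
  | .skip => .skip
  | .seq s1 s2 => .seq s2.inv s1.inv
mutual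
/-- Big-step semantics of Janus, `⟨σ, s⟩ ⇓ σ'`. -/
inductive BigStep (Γ : String → Stmt) : Store → Stmt → Store → Prop where
  | assVar {σ : Store} {x : String} {op : Op} {e : Expr} :
      BigStep Γ σ (.assign x op e)
        (σ.update (.var x) (op.apply (σ (.var x)) (e.eval σ)))
  | assArr {σ : Store} {x : String} {ei e : Expr} {op : Op} :
      BigStep Γ σ (.assignArr x ei op e)
        (σ.update (.arr x (ei.eval σ)) (op.apply (σ (.arr x (ei.eval σ))) (e.eval σ)))
  | call {σ σ' : Store} {id : String} :
      BigStep Γ σ (Γ id) σ' → BigStep Γ σ (.call id) σ'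
  | uncall {σ σ' : Store} {id : String} :
      BigStep Γ σ (Γ id).inv σ' → BigStep Γ σ (.uncall id) σ'
  | seq {σ σ' σ'' : Store} {s1 s2 : Stmt} :
      BigStep Γ σ s1 σ' → BigStep Γ σ' s2 σ'' → BigStep Γ σ (.seq s1 s2) σ''
  | ifTrue {σ σ' : Store} {e1 e2 : Expr} {s1 s2 : Stmt} :
      e1.eval σ ≠ 0 → BigStep Γ σ s1 σ' → e2.eval σ' ≠ 0 →
      BigStep Γ σ (.cond e1 s1 s2 e2) σ'
  | ifFalse {σ σ' : Store} {e1 e2 : Expr} {s1 s2 : Stmt} :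
      e1.eval σ = 0 → BigStep Γ σ s2 σ' → e2.eval σ' = 0 →
      BigStep Γ σ (.cond e1 s1 s2 e2) σ'
  | loopMain {σ σ' σ'' : Store} {e1 e2 : Expr} {s1 s2 : Stmt} :
      e1.eval σ ≠ 0 → BigStep Γ σ s1 σ' → BigLoop Γ σ' e1 s1 s2 e2 σ'' →
      BigStep Γ σ (.loop e1 s1 s2 e2) σ''
  | skip {σ : Store} : BigStep Γ σ .skip σ

/-- Big-step loop-iteration judgement on tuples `(e1, s1, e2, s2)`,
`⟨σ, (e1,s1,e2,s2)⟩ ⇓ σ'`. -/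
inductive BigLoop (Γ : String → Stmt) : Store → Expr → Stmt → Stmt → Expr → Store → Prop where
  | base {σ : Store} {e1 e2 : Expr} {s1 s2 : Stmt} :
      e2.eval σ ≠ 0 → BigLoop Γ σ e1 s1 s2 e2 σ
  | step {σ σ' σ'' σ''' : Store} {e1 e2 : Expr} {s1 s2 : Stmt} :
      e2.eval σ = 0 → BigStep Γ σ s2 σ' → e1.eval σ' = 0 → BigStep Γ σ' s1 σ'' →
      BigLoop Γ σ'' e1 s1 s2 e2 σ''' → BigLoop Γ σ e1 s1 s2 e2 σ'''
end

/-- Big-step reversibility of Janus conditionals via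
inversion: if `⟨σ, if e1 then s1 else s2 fi e2⟩ ⇓ σ'` and executing the
inverted branches undoes the original ones, then
`⟨σ', if e2 then I(s1) else I(s2) fi e1⟩ ⇓ σ`. -/
theorem stmt19_cond_reversible (Γ : String → Stmt) (σ σ' : Store)
    (e1 e2 : Expr) (s1 s2 : Stmt)
    (h : BigStep Γ σ (.cond e1 s1 s2 e2) σ')
    (h1 : BigStep Γ σ s1 σ' → BigStep Γ σ' s1.inv σ)
    (h2 : BigStep Γ σ s2 σ' → BigStep Γ σ' s2.inv σ) :
    BigStep Γ σ' (.cond e2 s1.inv s2.inv e1) σ := by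
  cases h with
  | ifTrue ha hb hc => exact .ifTrue hc (h1 hb) ha
  | ifFalse ha hb hc => exact .ifFalse hc (h2 hb) ha
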